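/- Quotients under 2p-morphisms (compact case). Let X₁,…,X_d and Y₁,…,Y_d be commuting essentially normal tuples of bounded operators on complex Hilbert spaces H and K respectively, with X₁H + ⋯ + X_dH closed of finite codimension in H and Y₁K + ⋯ + Y_dK closed of finite codimension in K. Let L : H → K be a bounded operator with LX_k = Y_kL and L*Y_k − X_kL* compact for all k. Let M ⊆ H be a closed subspace with X_kM ⊆ M for all k such that N = L(M) is closed and the restricted tuple (X_k|_M) is essentially normal. Let P_M, P_N be the orthogonal projections onto M, N and P_M⊥ = 1 − P_M, P_N⊥ = 1 − P_N. Then: (a) the compressed tuple (P_{M⊥}X_k|_{M⊥}) on M^⊥ and the compressed tuple (P_{N⊥}Y_k|_{N⊥}) on N^⊥ are both essentially normal; (b) the promoted map L̇ : M^⊥ → N^⊥, L̇ξ = P_{N⊥}Lξ, satisfies: P_{N⊥}LX_k*P_{M⊥} − Y_k*P_{N⊥}LP_{M⊥} is compact for every k = 1,…,d. -/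

import Mathlib

set_option synthInstance.maxHeartbeats 1000000
set_option maxHeartbeats 1000000

open ContinuousLinearMap

/-- The restriction of a continuous linear operator to an invariant submodule. -/
noncomputable def clmRestrict {E : Type*} [NormedAddCommGroup E] [InnerProductSpace ℂ E]
    [CompleteSpace E] (T : E →L[ℂ] E) (U : Submodule ℂ E)
    (h : ∀ x ∈ U, T x ∈ U) : U →L[ℂ] U :=
  { toLinearMap := (T : E →ₗ[ℂ] E).restrict h
    cont := Continuous.subtype_mk (T.continuous.comp continuous_subtype_val) _ }

/-- A tuple `T` of (commuting) operators is *essentially normal* if all of the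
self-commutators `T j (T k)* − (T k)* T j` are compact. -/
def EssNormal {d : ℕ} {F : Type*} [NormedAddCommGroup F] [InnerProductSpace ℂ F]
    [CompleteSpace F] (T : Fin d → F →L[ℂ] F) : Prop :=
  ∀ j k, IsCompactOperator ⇑(T j ∘L adjoint (T k) - adjoint (T k) ∘L T j)

/-- Essential normality of the restriction of a tuple of operators to a closed
invariant subspace `U` (the Hilbert submodule `U`). -/
def EssNormalOn {E : Type*} [NormedAddCommGroup E] [InnerProductSpace ℂ E]
    [CompleteSpace E] {d : ℕ} (T : Fin d → E →L[ℂ] E) (U : Submodule ℂ E)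
    (hU : IsClosed (U : Set E)) (hinv : ∀ k, ∀ x ∈ U, T k x ∈ U) : Prop :=
  haveI : CompleteSpace U := hU.completeSpace_coe
  EssNormal (fun k => clmRestrict (T k) U (hinv k))

/-- The orthogonal projection onto a closed subspace, as an operator on the ambient space. -/
noncomputable def projOf {E : Type*} [NormedAddCommGroup E] [InnerProductSpace ℂ E]
    [CompleteSpace E] (U : Submodule ℂ E) (hU : IsClosed (U : Set E)) : E →L[ℂ] E :=
  haveI : CompleteSpace U := hU.completeSpace_coe
  U.subtypeL ∘L U.orthogonalProjectionOnto

/-- The compression of a tuple of operators to the orthogonal complement of a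
submodule `M`; this is the coordinate tuple of the quotient Hilbert module `E/M`. -/
noncomputable def compressPerp {E : Type*} [NormedAddCommGroup E] [InnerProductSpace ℂ E]
    [CompleteSpace E] {d : ℕ} (T : Fin d → E →L[ℂ] E) (M : Submodule ℂ E) :
    Fin d → ↥(Mᗮ) →L[ℂ] ↥(Mᗮ) :=
  fun k => (Mᗮ).orthogonalProjectionOnto ∘L T k ∘L (Mᗮ).subtypeL

section Helpers
set_option linter.unusedSectionVars false
open Metric Set

variable {E F G G' : Type*} [NormedAddCommGroup E] [InnerProductSpace ℂ E] [CompleteSpace E]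
  [NormedAddCommGroup F] [InnerProductSpace ℂ F] [CompleteSpace F]
  [NormedAddCommGroup G] [InnerProductSpace ℂ G] [CompleteSpace G]
  [NormedAddCommGroup G'] [InnerProductSpace ℂ G'] [CompleteSpace G']

lemma compL (S : F →L[ℂ] G) {T : E →L[ℂ] F} (h : IsCompactOperator ⇑T) :
    IsCompactOperator ⇑(S ∘L T) := by
  simpa [ContinuousLinearMap.coe_comp'] using h.clm_comp S

lemma compR {S : F →L[ℂ] G} (h : IsCompactOperator ⇑S) (T : E →L[ℂ] F) :
    IsCompactOperator ⇑(S ∘L T) := by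
  simpa [ContinuousLinearMap.coe_comp'] using h.comp_clm T

lemma conjCompact {C : F →L[ℂ] G} (hC : IsCompactOperator ⇑C) (A : G →L[ℂ] G') (B : E →L[ℂ] F) :
    IsCompactOperator ⇑(A ∘L C ∘L B) := by
  simpa [ContinuousLinearMap.comp_assoc] using compR (compL A hC) B

section Proj
variable (U : Submodule ℂ E) (hU : IsClosed (U : Set E))

lemma projOf_apply (x : E) :
    haveI : CompleteSpace U := hU.completeSpace_coe
    projOf U hU x = (Submodule.orthogonalProjectionOnto U x : E) := rfl

lemma projOf_def :
    haveI : CompleteSpace U := hU.completeSpace_coe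
    projOf U hU = U.subtypeL ∘L Submodule.orthogonalProjectionOnto U := rfl

lemma projOf_apply_mem (x : E) : projOf U hU x ∈ U := by
  haveI : CompleteSpace U := hU.completeSpace_coe
  exact (Submodule.orthogonalProjectionOnto U x).2

lemma projOf_eq_self {x : E} (hx : x ∈ U) : projOf U hU x = x := by
  haveI : CompleteSpace U := hU.completeSpace_coe
  rw [projOf_apply]
  exact Submodule.starProjection_eq_self_iff.mpr hx

lemma projOf_comp_projOf : projOf U hU ∘L projOf U hU = projOf U hU :=
  ContinuousLinearMap.ext fun x => projOf_eq_self U hU (projOf_apply_mem U hU x)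

lemma adjoint_projOf : adjoint (projOf U hU) = projOf U hU := by
  haveI : CompleteSpace U := hU.completeSpace_coe
  have h := isSelfAdjoint_starProjection U
  rwa [IsSelfAdjoint, ContinuousLinearMap.star_eq_adjoint] at h

lemma orth_eq_one_sub_projOf :
    Uᗮ.subtypeL ∘L Submodule.orthogonalProjectionOnto Uᗮ = 1 - projOf U hU := by
  haveI : CompleteSpace U := hU.completeSpace_coe
  have h := Submodule.id_eq_sum_starProjection_self_orthogonalComplement (K := U) (𝕜 := ℂ)
  rw [ContinuousLinearMap.one_def, h, projOf_def]
  simp only [Submodule.starProjection, add_sub_cancel_left]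

lemma projOf_comp_orthSubtypeL : projOf U hU ∘L Uᗮ.subtypeL = 0 := by
  haveI : CompleteSpace U := hU.completeSpace_coe
  ext x
  simp only [ContinuousLinearMap.comp_apply, Submodule.subtypeL_apply, projOf_apply,
    ContinuousLinearMap.zero_apply]
  rw [Submodule.orthogonalProjectionOnto_apply_of_mem_orthogonal x.2]
  rfl

lemma orthProj_comp_projOf : Submodule.orthogonalProjectionOnto Uᗮ ∘L projOf U hU = 0 := by
  haveI : CompleteSpace U := hU.completeSpace_coe
  ext x
  simp only [ContinuousLinearMap.comp_apply, ContinuousLinearMap.zero_apply]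
  rw [Submodule.orthogonalProjectionOnto_apply_of_mem_orthogonal
    (Submodule.le_orthogonal_orthogonal U (projOf_apply_mem U hU x))]

lemma hinv_comp (T : E →L[ℂ] E) (h : ∀ x ∈ U, T x ∈ U) :
    T ∘L projOf U hU = projOf U hU ∘L (T ∘L projOf U hU) :=
  ContinuousLinearMap.ext fun x =>
    (projOf_eq_self U hU (h _ (projOf_apply_mem U hU x))).symm

lemma adjoint_compress (S : E →L[ℂ] E) (V : Submodule ℂ E) [CompleteSpace ↥V] :
    adjoint (Submodule.orthogonalProjectionOnto V ∘L S ∘L V.subtypeL)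
      = Submodule.orthogonalProjectionOnto V ∘L adjoint S ∘L V.subtypeL := by
  symm
  rw [ContinuousLinearMap.eq_adjoint_iff]
  intro x y
  simp only [ContinuousLinearMap.comp_apply, Submodule.subtypeL_apply,
    Submodule.inner_orthogonalProjectionOnto_eq_of_mem_right, Submodule.inner_orthogonalProjectionOnto_eq_of_mem_left,
    adjoint_inner_left]

lemma clmRestrict_eq (T : E →L[ℂ] E) (h : ∀ x ∈ U, T x ∈ U) :
    haveI : CompleteSpace U := hU.completeSpace_coe
    clmRestrict T U h = Submodule.orthogonalProjectionOnto U ∘L T ∘L U.subtypeL := by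
  haveI : CompleteSpace U := hU.completeSpace_coe
  ext x
  show T ↑x = ↑(Submodule.orthogonalProjectionOnto U (T ↑x))
  exact (Submodule.starProjection_eq_self_iff.mpr (h _ x.2)).symm

lemma orthProj_comp_subtypeL (V : Submodule ℂ E) [CompleteSpace ↥V] :
    (Submodule.orthogonalProjectionOnto V) ∘L V.subtypeL = 1 := by
  ext x
  simp [Submodule.orthogonalProjectionOnto_mem_subspace_eq_self]

end Proj

section CompactCore
variable {E F G : Type*} [NormedAddCommGroup E] [InnerProductSpace ℂ E] [CompleteSpace E]
  [NormedAddCommGroup F] [InnerProductSpace ℂ F] [CompleteSpace F]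
  [NormedAddCommGroup G] [InnerProductSpace ℂ G] [CompleteSpace G]

local notation "⟪" x ", " y "⟫" => @inner ℂ _ _ x y

/-- If `T*T` is compact then so is `T`. -/
lemma compact_of_adjoint_comp (T : E →L[ℂ] F)
    (h : IsCompactOperator ⇑(adjoint T ∘L T)) : IsCompactOperator ⇑T := by
  have h1 : IsCompactOperator ⇑(T.toLinearMap) := by
    rw [isCompactOperator_iff_isCompact_closure_image_closedBall _ one_pos]
    refine isCompact_iff_totallyBounded_isComplete.mpr
      ⟨(TotallyBounded.closure ?_), isClosed_closure.isComplete⟩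
    rw [Metric.totallyBounded_iff]
    intro ε hε
    have hS : TotallyBounded (⇑(adjoint T ∘L T) '' Metric.closedBall (0:E) 1) := by
      have := ((h.isCompact_closure_image_closedBall (𝕜₁ := ℂ)
        (f := (adjoint T ∘L T).toLinearMap) 1).totallyBounded).subset subset_closure
      exact this
    rw [totallyBounded_iff_subset] at hS
    obtain ⟨t, htS, htfin, hcover⟩ :=
      hS _ (Metric.dist_mem_uniformity (show (0:ℝ) < ε ^ 2 / 2 by positivity))
    have hch : ∀ y ∈ t, ∃ x, x ∈ Metric.closedBall (0:E) 1 ∧ (adjoint T ∘L T) x = y := by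
      intro y hy
      obtain ⟨x, hx, hxy⟩ := htS hy
      exact ⟨x, hx, hxy⟩
    choose! c hc1 hc2 using hch
    refine ⟨(fun y => T (c y)) '' t, htfin.image _, ?_⟩
    rintro z ⟨x, hx, rfl⟩
    have := hcover ⟨x, hx, rfl⟩
    simp only [Set.mem_iUnion, Set.mem_setOf_eq] at this
    obtain ⟨y, hyt, hdy⟩ := this
    refine Set.mem_iUnion₂.mpr ⟨T (c y), ⟨y, hyt, rfl⟩, ?_⟩
    simp only [Metric.mem_ball, ContinuousLinearMap.coe_coe]
    rw [dist_eq_norm, ← map_sub]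
    have hnx : ‖x‖ ≤ 1 := by simpa using hx
    have hncy : ‖c y‖ ≤ 1 := by simpa using (hc1 y hyt)
    have key : ‖T (x - c y)‖ ^ 2 ≤ ‖(adjoint T ∘L T) x - y‖ * 2 := by
      have e1 : (‖T (x - c y)‖ : ℝ) ^ 2 = RCLike.re ⟪(adjoint T ∘L T) (x - c y), (x - c y)⟫ := by
        rw [ContinuousLinearMap.comp_apply, adjoint_inner_left, inner_self_eq_norm_sq]
      have e2 : RCLike.re ⟪(adjoint T ∘L T) (x - c y), (x - c y)⟫ ≤
          ‖(adjoint T ∘L T) (x - c y)‖ * ‖x - c y‖ := by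
        calc RCLike.re ⟪(adjoint T ∘L T) (x - c y), (x - c y)⟫
            ≤ ‖⟪(adjoint T ∘L T) (x - c y), (x - c y)⟫‖ := RCLike.re_le_norm _
          _ ≤ _ := norm_inner_le_norm _ _
      have e3 : ‖(adjoint T ∘L T) (x - c y)‖ = ‖(adjoint T ∘L T) x - y‖ := by
        rw [map_sub, hc2 y hyt]
      have e4 : ‖x - c y‖ ≤ 2 := by
        calc ‖x - c y‖ ≤ ‖x‖ + ‖c y‖ := norm_sub_le _ _
          _ ≤ 2 := by linarith
      calc (‖T (x - c y)‖ : ℝ) ^ 2 ≤ ‖(adjoint T ∘L T) (x - c y)‖ * ‖x - c y‖ := by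
            rw [e1] at *; exact e2
        _ ≤ ‖(adjoint T ∘L T) x - y‖ * 2 := by
            rw [e3]; exact mul_le_mul_of_nonneg_left e4 (norm_nonneg _)
    have hd : ‖(adjoint T ∘L T) x - y‖ < ε ^ 2 / 2 := by
      rwa [dist_eq_norm] at hdy
    have : ‖T (x - c y)‖ ^ 2 < ε ^ 2 := by nlinarith
    nlinarith [norm_nonneg (T (x - c y)), sq_nonneg (‖T (x - c y)‖ - ε)]
  exact h1

/-- The adjoint of a compact operator is compact. -/
lemma compact_adjoint {T : E →L[ℂ] F} (h : IsCompactOperator ⇑T) :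
    IsCompactOperator ⇑(adjoint T) := by
  apply compact_of_adjoint_comp
  rw [adjoint_adjoint]
  exact compR h (adjoint T)

/-- If `T T*` is compact then so is `T`. -/
lemma compact_of_comp_adjoint (T : E →L[ℂ] F)
    (h : IsCompactOperator ⇑(T ∘L adjoint T)) : IsCompactOperator ⇑T := by
  have : IsCompactOperator ⇑(adjoint T) := by
    apply compact_of_adjoint_comp
    rwa [adjoint_adjoint]
  simpa [adjoint_adjoint] using compact_adjoint this

end CompactCore

-- main helpers
variable {E : Type*} [NormedAddCommGroup E] [InnerProductSpace ℂ E] [CompleteSpace E]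



lemma PTQ_compact (T : E →L[ℂ] E) (U : Submodule ℂ E) (hU : IsClosed (U : Set E))
    (hinv : ∀ x ∈ U, T x ∈ U)
    (hT : IsCompactOperator ⇑(T ∘L adjoint T - adjoint T ∘L T))
    (hA : haveI : CompleteSpace U := hU.completeSpace_coe
      IsCompactOperator ⇑(clmRestrict T U hinv ∘L adjoint (clmRestrict T U hinv)
        - adjoint (clmRestrict T U hinv) ∘L clmRestrict T U hinv)) :
    IsCompactOperator ⇑(projOf U hU ∘L T ∘L (1 - projOf U hU)) := by
  haveI : CompleteSpace U := hU.completeSpace_coe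
  set P := projOf U hU with hPdef
  set π := Submodule.orthogonalProjectionOnto U with hπdef
  set ι := U.subtypeL with hιdef
  set T' := adjoint T with hT'def
  set A := clmRestrict T U hinv with hAdef
  have hAeq : A = π ∘L T ∘L ι := clmRestrict_eq U hU T hinv
  have hadjA : adjoint A = π ∘L T' ∘L ι := by rw [hAeq, adjoint_compress]
  set B := P ∘L T ∘L (1 - P) with hBdef
  apply compact_of_comp_adjoint
  have hadjQ : adjoint (1 - P : E →L[ℂ] E) = 1 - P := by
    rw [map_sub, hPdef, adjoint_projOf, ContinuousLinearMap.one_def, adjoint_id]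
  have hadjB : adjoint B = (1 - P) ∘L T' ∘L P := by
    rw [hBdef, adjoint_comp, adjoint_comp, hadjQ, hPdef, adjoint_projOf, ← hT'def,
      ← ContinuousLinearMap.comp_assoc, ← hPdef]
  have hPP : ∀ y, P (P y) = P y := fun y => projOf_eq_self U hU (projOf_apply_mem U hU y)
  have hTP : ∀ y, P (T (P y)) = T (P y) :=
    fun y => projOf_eq_self U hU (hinv _ (projOf_apply_mem U hU y))
  have key : B ∘L adjoint B
      = P ∘L (T ∘L T' - T' ∘L T) ∘L P
        - ι ∘L (A ∘L adjoint A - adjoint A ∘L A) ∘L π := by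
    rw [hadjB, hBdef, hadjA, hAeq]
    ext x
    simp only [ContinuousLinearMap.comp_apply, ContinuousLinearMap.sub_apply,
      ContinuousLinearMap.one_apply, ContinuousLinearMap.coe_sub',
      Pi.sub_apply, Submodule.subtypeL_apply, map_sub]
    have hιπ : ∀ y, ι (π y) = P y := fun _ => rfl
    simp only [hιπ, map_sub, hPP, hTP]
    abel
  rw [key]
  have h1 : IsCompactOperator ⇑(P ∘L (T ∘L T' - T' ∘L T) ∘L P) := conjCompact hT P P
  have h2 : IsCompactOperator ⇑(ι ∘L (A ∘L adjoint A - adjoint A ∘L A) ∘L π) :=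
    conjCompact hA ι π
  simpa [ContinuousLinearMap.coe_sub'] using h1.sub h2

lemma PT_sub_TP_compact (T : E →L[ℂ] E) (U : Submodule ℂ E) (hU : IsClosed (U : Set E))
    (hinv : ∀ x ∈ U, T x ∈ U)
    (hPTQ : IsCompactOperator ⇑(projOf U hU ∘L T ∘L (1 - projOf U hU))) :
    IsCompactOperator ⇑(projOf U hU ∘L T - T ∘L projOf U hU) := by
  have key : projOf U hU ∘L T - T ∘L projOf U hU
      = projOf U hU ∘L T ∘L (1 - projOf U hU) := by
    ext x
    have hTP : ∀ y, projOf U hU (T (projOf U hU y)) = T (projOf U hU y) :=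
      fun y => projOf_eq_self U hU (hinv _ (projOf_apply_mem U hU y))
    simp only [ContinuousLinearMap.comp_apply, ContinuousLinearMap.sub_apply,
      ContinuousLinearMap.one_apply, map_sub, hTP]
  rw [key]; exact hPTQ

lemma compress_comm_compact (S T : E →L[ℂ] E) (U : Submodule ℂ E) (hU : IsClosed (U : Set E))
    (hSinv : ∀ x ∈ U, S x ∈ U)
    (hST : IsCompactOperator ⇑(S ∘L adjoint T - adjoint T ∘L S))
    (hPSQ : IsCompactOperator ⇑(projOf U hU ∘L S ∘L (1 - projOf U hU))) :
    IsCompactOperator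
      ⇑((Submodule.orthogonalProjectionOnto Uᗮ ∘L S ∘L Uᗮ.subtypeL)
          ∘L adjoint (Submodule.orthogonalProjectionOnto Uᗮ ∘L T ∘L Uᗮ.subtypeL)
        - adjoint (Submodule.orthogonalProjectionOnto Uᗮ ∘L T ∘L Uᗮ.subtypeL)
          ∘L (Submodule.orthogonalProjectionOnto Uᗮ ∘L S ∘L Uᗮ.subtypeL)) := by
  haveI : CompleteSpace U := hU.completeSpace_coe
  set P := projOf U hU with hPdef
  set T' := adjoint T with hT'def
  have hPP : ∀ y, P (P y) = P y := fun y => projOf_eq_self U hU (projOf_apply_mem U hU y)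
  have hSP : ∀ y, P (S (P y)) = S (P y) :=
    fun y => projOf_eq_self U hU (hSinv _ (projOf_apply_mem U hU y))
  have hPι : ∀ x : ↥Uᗮ, P (↑x) = 0 := by
    intro x
    have := projOf_comp_orthSubtypeL U hU
    calc P ↑x = (projOf U hU ∘L Uᗮ.subtypeL) x := rfl
      _ = 0 := by rw [this]; rfl
  have key : (Submodule.orthogonalProjectionOnto Uᗮ ∘L S ∘L Uᗮ.subtypeL)
          ∘L adjoint (Submodule.orthogonalProjectionOnto Uᗮ ∘L T ∘L Uᗮ.subtypeL)
        - adjoint (Submodule.orthogonalProjectionOnto Uᗮ ∘L T ∘L Uᗮ.subtypeL)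
          ∘L (Submodule.orthogonalProjectionOnto Uᗮ ∘L S ∘L Uᗮ.subtypeL)
      = Submodule.orthogonalProjectionOnto Uᗮ ∘L (S ∘L T' - T' ∘L S) ∘L Uᗮ.subtypeL
        + (Submodule.orthogonalProjectionOnto Uᗮ ∘L T') ∘L (P ∘L S ∘L (1 - P)) ∘L Uᗮ.subtypeL := by
    rw [adjoint_compress]
    ext x
    have hQ : ∀ y, ((Submodule.orthogonalProjectionOnto Uᗮ y : ↥Uᗮ) : E) = y - P y := by
      intro y
      have h := orth_eq_one_sub_projOf U hU
      calc ((Submodule.orthogonalProjectionOnto Uᗮ y : ↥Uᗮ) : E)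
          = (Uᗮ.subtypeL ∘L Submodule.orthogonalProjectionOnto Uᗮ) y := rfl
        _ = y - P y := by rw [h]; rfl
    simp only [ContinuousLinearMap.comp_apply, ContinuousLinearMap.sub_apply,
      ContinuousLinearMap.add_apply, ContinuousLinearMap.one_apply,
      Submodule.subtypeL_apply, Submodule.coe_sub, Submodule.coe_add, hQ, map_sub,
      hPP, hSP, hPι, map_zero, sub_zero]
    abel
  rw [key]
  have h1 : IsCompactOperator
      ⇑(Submodule.orthogonalProjectionOnto Uᗮ ∘L (S ∘L T' - T' ∘L S) ∘L Uᗮ.subtypeL) :=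
    conjCompact hST (Submodule.orthogonalProjectionOnto Uᗮ) Uᗮ.subtypeL
  have h2 : IsCompactOperator
      ⇑((Submodule.orthogonalProjectionOnto Uᗮ ∘L T') ∘L (P ∘L S ∘L (1 - P)) ∘L Uᗮ.subtypeL) :=
    conjCompact hPSQ (Submodule.orthogonalProjectionOnto Uᗮ ∘L T') Uᗮ.subtypeL
  simpa [ContinuousLinearMap.coe_add'] using h1.add h2

lemma exists_rightInv {F : Type*} [NormedAddCommGroup F] [InnerProductSpace ℂ F]
    [CompleteSpace F] (A : E →L[ℂ] F) (N' : Submodule ℂ F) (hN : IsClosed (N' : Set F))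
    (hrange : LinearMap.range (A : E →ₗ[ℂ] F) = N') :
    ∃ S : F →L[ℂ] E, A ∘L S = projOf N' hN := by
  subst hrange
  haveI : CompleteSpace (LinearMap.range (A : E →ₗ[ℂ] F)) := hN.completeSpace_coe
  haveI : CompleteSpace ((LinearMap.ker (A : E →ₗ[ℂ] F))ᗮ : Submodule ℂ E) := inferInstance
  have hmem : ∀ x : ((LinearMap.ker (A : E →ₗ[ℂ] F))ᗮ : Submodule ℂ E),
      (A ∘L ((LinearMap.ker (A : E →ₗ[ℂ] F))ᗮ).subtypeL) x ∈ LinearMap.range (A : E →ₗ[ℂ] F) := fun x => ⟨↑x, rfl⟩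
  let f : ↥((LinearMap.ker (A : E →ₗ[ℂ] F))ᗮ) →L[ℂ] ↥(LinearMap.range (A : E →ₗ[ℂ] F)) :=
    (A ∘L ((LinearMap.ker (A : E →ₗ[ℂ] F))ᗮ).subtypeL).codRestrict _ hmem
  have hker : LinearMap.ker f.toLinearMap = ⊥ := by
    rw [Submodule.eq_bot_iff]
    rintro x hx
    have hx0 : A ↑x = 0 := by
      have : (f x : F) = 0 := by rw [show f x = 0 from hx]; rfl
      simpa [f] using this
    have hmemker : (↑x : E) ∈ LinearMap.ker (A : E →ₗ[ℂ] F) := hx0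
    have : (↑x : E) = 0 := by
      have h2 := x.2
      rw [Submodule.mem_orthogonal] at h2
      exact inner_self_eq_zero.mp (h2 _ hmemker)
    exact Subtype.ext this
  have hrange : LinearMap.range f.toLinearMap = ⊤ := by
    rw [LinearMap.range_eq_top]
    rintro ⟨y, x, rfl⟩
    obtain ⟨u, hu, z, hz, hx⟩ := (LinearMap.ker (A : E →ₗ[ℂ] F)).exists_add_mem_mem_orthogonal x
    refine ⟨⟨z, hz⟩, ?_⟩
    apply Subtype.ext
    show A z = A x
    rw [hx, map_add, show A u = 0 from hu, zero_add]
  let e := ContinuousLinearEquiv.ofBijective f hker hrange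
  refine ⟨((LinearMap.ker (A : E →ₗ[ℂ] F))ᗮ).subtypeL ∘L (e.symm : ↥(LinearMap.range (A : E →ₗ[ℂ] F)) →L[ℂ] _)
      ∘L Submodule.orthogonalProjectionOnto (LinearMap.range (A : E →ₗ[ℂ] F)), ?_⟩
  ext y
  have h1 : ∀ w : ↥((LinearMap.ker (A : E →ₗ[ℂ] F))ᗮ), A ↑w = ↑(f w) := fun w => rfl
  calc (A ∘L (((LinearMap.ker (A : E →ₗ[ℂ] F))ᗮ).subtypeL ∘L (e.symm : _ →L[ℂ] _)
        ∘L Submodule.orthogonalProjectionOnto (LinearMap.range (A : E →ₗ[ℂ] F)))) y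
      = A ↑(e.symm (Submodule.orthogonalProjectionOnto (LinearMap.range (A : E →ₗ[ℂ] F)) y)) := rfl
    _ = ↑(f (e.symm (Submodule.orthogonalProjectionOnto (LinearMap.range (A : E →ₗ[ℂ] F)) y))) := h1 _
    _ = ↑(e (e.symm (Submodule.orthogonalProjectionOnto (LinearMap.range (A : E →ₗ[ℂ] F)) y))) := by
        rw [ContinuousLinearEquiv.coeFn_ofBijective]
    _ = ↑(Submodule.orthogonalProjectionOnto (LinearMap.range (A : E →ₗ[ℂ] F)) y) := by
        rw [ContinuousLinearEquiv.apply_symm_apply]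
    _ = projOf (LinearMap.range (A : E →ₗ[ℂ] F)) hN y := rfl





lemma adjoint_PTQ {E : Type*} [NormedAddCommGroup E] [InnerProductSpace ℂ E] [CompleteSpace E]
    (T : E →L[ℂ] E) (U : Submodule ℂ E) (hU : IsClosed (U : Set E)) :
    adjoint (projOf U hU ∘L T ∘L (1 - projOf U hU))
      = (1 - projOf U hU) ∘L adjoint T ∘L projOf U hU := by
  haveI : CompleteSpace U := hU.completeSpace_coe
  have hadjQ : adjoint (1 - projOf U hU : E →L[ℂ] E) = 1 - projOf U hU := by
    rw [map_sub, adjoint_projOf, ContinuousLinearMap.one_def, adjoint_id]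
  rw [adjoint_comp, adjoint_comp, hadjQ, adjoint_projOf, ← ContinuousLinearMap.comp_assoc]

end Helpers

/-- Quotients under `∞`-morphisms: with `L` a homomorphism of essentially normal Hilbert
modules intertwining adjoints modulo compacts, and `M` a closed invariant subspace with
`N = L(M)` closed and the restriction of `X` to `M` essentially normal, the quotient
modules `H/M = M^⊥` and `K/N = N^⊥` are essentially normal, and the promoted map
`L̇ = P_{N⊥} L |_{M⊥}` intertwines the adjoints of the coordinate operators modulo
compacts: `P_{N⊥}LX_k*P_{M⊥} − Y_k*P_{N⊥}LP_{M⊥}` is compact. -/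

theorem stmt9 {H K : Type*}
    [NormedAddCommGroup H] [InnerProductSpace ℂ H] [CompleteSpace H]
    [NormedAddCommGroup K] [InnerProductSpace ℂ K] [CompleteSpace K]
    {d : ℕ} (X : Fin d → H →L[ℂ] H) (Y : Fin d → K →L[ℂ] K)
    (hXcomm : ∀ j k, X j ∘L X k = X k ∘L X j)
    (hYcomm : ∀ j k, Y j ∘L Y k = Y k ∘L Y j)
    (hXen : EssNormal X) (hYen : EssNormal Y)
    (hXcl : IsClosed ((⨆ k, LinearMap.range (X k : H →ₗ[ℂ] H) : Submodule ℂ H) : Set H))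
    (hXfd : FiniteDimensional ℂ ↥((⨆ k, LinearMap.range (X k : H →ₗ[ℂ] H) : Submodule ℂ H)ᗮ))
    (hYcl : IsClosed ((⨆ k, LinearMap.range (Y k : K →ₗ[ℂ] K) : Submodule ℂ K) : Set K))
    (hYfd : FiniteDimensional ℂ ↥((⨆ k, LinearMap.range (Y k : K →ₗ[ℂ] K) : Submodule ℂ K)ᗮ))
    (L : H →L[ℂ] K)
    (hLmod : ∀ k, L ∘L X k = Y k ∘L L)
    (hLmor : ∀ k, IsCompactOperator ⇑(adjoint L ∘L Y k - X k ∘L adjoint L))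
    (M : Submodule ℂ H) (hMc : IsClosed (M : Set H))
    (hMinv : ∀ k, ∀ x ∈ M, X k x ∈ M)
    (hNc : IsClosed ((Submodule.map (L : H →ₗ[ℂ] K) M : Submodule ℂ K) : Set K))
    (hMen : EssNormalOn X M hMc hMinv) :
    (EssNormal (compressPerp X M) ∧ EssNormal (compressPerp Y (Submodule.map (L : H →ₗ[ℂ] K) M))) ∧
    (∀ k, IsCompactOperator
        ⇑(((1 - projOf (Submodule.map (L : H →ₗ[ℂ] K) M) hNc) ∘L L ∘L adjoint (X k) ∘L (1 - projOf M hMc)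
          - adjoint (Y k) ∘L (1 - projOf (Submodule.map (L : H →ₗ[ℂ] K) M) hNc) ∘L L ∘L (1 - projOf M hMc)
          : H →L[ℂ] K))) := by
  classical
  haveI : CompleteSpace M := hMc.completeSpace_coe
  haveI : CompleteSpace (Submodule.map (L : H →ₗ[ℂ] K) M : Submodule ℂ K) := hNc.completeSpace_coe
  set N : Submodule ℂ K := Submodule.map (L : H →ₗ[ℂ] K) M with hNdef
  have hMen' : ∀ j k : Fin d, IsCompactOperator
      ⇑(clmRestrict (X j) M (hMinv j) ∘L adjoint (clmRestrict (X k) M (hMinv k))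
        - adjoint (clmRestrict (X k) M (hMinv k)) ∘L clmRestrict (X j) M (hMinv j)) := hMen
  have hPXQ : ∀ k, IsCompactOperator ⇑(projOf M hMc ∘L X k ∘L (1 - projOf M hMc)) :=
    fun k => PTQ_compact (X k) M hMc (hMinv k) (hXen k k) (hMen' k k)
  have hLX : ∀ k, ∀ m : H, L (X k m) = Y k (L m) := by
    intro k m
    exact ContinuousLinearMap.ext_iff.mp (hLmod k) m
  have hNinv : ∀ k, ∀ y ∈ N, Y k y ∈ N := by
    rintro k y ⟨m, hm, rfl⟩
    exact ⟨X k m, hMinv k m hm, (hLX k m).symm ▸ rfl⟩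
  have hrange : LinearMap.range ((L ∘L projOf M hMc : H →L[ℂ] K) : H →ₗ[ℂ] K) = N := by
    apply le_antisymm
    · rintro y ⟨x, rfl⟩
      exact ⟨projOf M hMc x, projOf_apply_mem M hMc x, rfl⟩
    · rintro y ⟨m, hm, rfl⟩
      refine ⟨m, ?_⟩
      show L (projOf M hMc m) = L m
      rw [projOf_eq_self M hMc hm]
  obtain ⟨S, hS⟩ := exists_rightInv (L ∘L projOf M hMc) N hNc hrange
  set W : Fin d → H →L[ℂ] K := fun k => adjoint (adjoint L ∘L Y k - X k ∘L adjoint L) with hWdef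
  have hWc : ∀ k, IsCompactOperator ⇑(W k) := fun k => compact_adjoint (hLmor k)
  have hWeq : ∀ k, W k = adjoint (Y k) ∘L L - L ∘L adjoint (X k) := by
    intro k
    show adjoint (adjoint L ∘L Y k - X k ∘L adjoint L) = _
    rw [map_sub, adjoint_comp, adjoint_comp, adjoint_adjoint]
  have hW' : ∀ k, ∀ y : H, adjoint (Y k) (L y) = L (adjoint (X k) y) + W k y := by
    intro k y
    rw [hWeq k]
    simp only [ContinuousLinearMap.sub_apply, ContinuousLinearMap.comp_apply]
    abel
  have hQXP : ∀ k, IsCompactOperator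
      ⇑((1 - projOf M hMc) ∘L adjoint (X k) ∘L projOf M hMc) := by
    intro k
    rw [← adjoint_PTQ]
    exact compact_adjoint (hPXQ k)
  have hQLP : ∀ x : H, (1 - projOf N hNc) (L (projOf M hMc x)) = 0 := by
    intro x
    have hmem : L (projOf M hMc x) ∈ N := ⟨projOf M hMc x, projOf_apply_mem M hMc x, rfl⟩
    simp only [ContinuousLinearMap.sub_apply, ContinuousLinearMap.one_apply,
      projOf_eq_self N hNc hmem, sub_self]
  have hZ : ∀ k, IsCompactOperator
      ⇑((1 - projOf N hNc) ∘L adjoint (Y k) ∘L projOf N hNc) := by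
    intro k
    have key : (1 - projOf N hNc) ∘L adjoint (Y k) ∘L ((L ∘L projOf M hMc) ∘L S)
        = ((1 - projOf N hNc) ∘L L)
            ∘L ((1 - projOf M hMc) ∘L adjoint (X k) ∘L projOf M hMc) ∘L S
          + (1 - projOf N hNc) ∘L W k ∘L (projOf M hMc ∘L S) := by
      ext x
      have hPP : ∀ y, projOf M hMc (projOf M hMc y) = projOf M hMc y :=
        fun y => projOf_eq_self M hMc (projOf_apply_mem M hMc y)
      simp only [ContinuousLinearMap.comp_apply, ContinuousLinearMap.add_apply,
        ContinuousLinearMap.sub_apply, ContinuousLinearMap.one_apply, hW', map_sub, map_add,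
        hPP, hQLP]
      abel
    rw [hS] at key
    rw [key]
    have h1 : IsCompactOperator
        ⇑(((1 - projOf N hNc) ∘L L)
            ∘L ((1 - projOf M hMc) ∘L adjoint (X k) ∘L projOf M hMc) ∘L S) :=
      conjCompact (hQXP k) ((1 - projOf N hNc) ∘L L) S
    have h2 : IsCompactOperator
        ⇑((1 - projOf N hNc) ∘L W k ∘L (projOf M hMc ∘L S)) :=
      conjCompact (hWc k) (1 - projOf N hNc) (projOf M hMc ∘L S)
    simpa [ContinuousLinearMap.coe_add'] using h1.add h2
  have hPYQ : ∀ k, IsCompactOperator ⇑(projOf N hNc ∘L Y k ∘L (1 - projOf N hNc)) := by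
    intro k
    have h0 : (1 - projOf N hNc) ∘L adjoint (Y k) ∘L projOf N hNc
        = adjoint (projOf N hNc ∘L Y k ∘L (1 - projOf N hNc)) :=
      (adjoint_PTQ (Y k) N hNc).symm
    have h1 := compact_adjoint (h0 ▸ hZ k)
    rwa [adjoint_adjoint] at h1
  refine ⟨⟨?_, ?_⟩, ?_⟩
  · intro j k
    exact compress_comm_compact (X j) (X k) M hMc (hMinv j) (hXen j k) (hPXQ j)
  · intro j k
    exact compress_comm_compact (Y j) (Y k) N hNc (hNinv j) (hYen j k) (hPYQ j)
  · intro k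
    have hcomm : IsCompactOperator ⇑(projOf N hNc ∘L Y k - Y k ∘L projOf N hNc) :=
      PT_sub_TP_compact (Y k) N hNc (hNinv k) (hPYQ k)
    have hC : IsCompactOperator
        ⇑(adjoint (Y k) ∘L projOf N hNc - projOf N hNc ∘L adjoint (Y k)) := by
      have h1 := compact_adjoint hcomm
      have h2 : adjoint (projOf N hNc ∘L Y k - Y k ∘L projOf N hNc)
          = adjoint (Y k) ∘L projOf N hNc - projOf N hNc ∘L adjoint (Y k) := by
        rw [map_sub, adjoint_comp, adjoint_comp, adjoint_projOf]
      rwa [h2] at h1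
    have key : (1 - projOf N hNc) ∘L L ∘L adjoint (X k) ∘L (1 - projOf M hMc)
          - adjoint (Y k) ∘L (1 - projOf N hNc) ∘L L ∘L (1 - projOf M hMc)
        = ((adjoint (Y k) ∘L projOf N hNc - projOf N hNc ∘L adjoint (Y k)) ∘L L)
            ∘L (1 - projOf M hMc)
          - (1 - projOf N hNc) ∘L W k ∘L (1 - projOf M hMc) := by
      ext x
      simp only [ContinuousLinearMap.comp_apply, ContinuousLinearMap.sub_apply,
        ContinuousLinearMap.one_apply, hW', map_sub, map_add]
      abel
    rw [key]
    have h1 : IsCompactOperator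
        ⇑(((adjoint (Y k) ∘L projOf N hNc - projOf N hNc ∘L adjoint (Y k)) ∘L L)
            ∘L (1 - projOf M hMc)) :=
      compR (compR hC L) (1 - projOf M hMc)
    have h2 : IsCompactOperator
        ⇑((1 - projOf N hNc) ∘L W k ∘L (1 - projOf M hMc)) :=
      conjCompact (hWc k) (1 - projOf N hNc) (1 - projOf M hMc)
    simpa [ContinuousLinearMap.coe_sub'] using h1.sub h2
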